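/- (Smoothness for free amalgamation.) Let M be a finite graph, A ⊆ B ⊆ M and A ⊆ C ⊆ M induced subgraphs with B ∩ C = A, and suppose there is no edge of M between C \ A and B \ A. Then: A <*_c B if and only if C <*_c B∪C; A ≤*_i C if and only if B ≤*_i B∪C; and A ≤*_s B if and only if C ≤*_s B∪C (where B∪C denotes the induced subgraph of M on B ∪ C). -/
import Mathlib


namespace ZeroOneLaw

variable {V : Type*}

/-- `r` is an equivalence relation on the set `s` (and relates only elements of `s`). -/
def IsEquivOn (r : V → V → Prop) (s : Set V) : Prop :=
  (∀ x ∈ s, r x x) ∧ (∀ ⦃x y⦄, r x y → r y x) ∧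
    (∀ ⦃x y z⦄, r x y → r y z → r x z) ∧ (∀ ⦃x y⦄, r x y → x ∈ s ∧ y ∈ s)

/-- `C` is `r`-closed (a union of `r`-classes). -/
def RClosed (r : V → V → Prop) (C : Set V) : Prop :=
  ∀ ⦃x y⦄, x ∈ C → r x y → y ∈ C

/-- The restriction of the relation `r` to the set `C`. -/
def restrict (r : V → V → Prop) (C : Set V) : V → V → Prop :=
  fun x y => r x y ∧ x ∈ C ∧ y ∈ C

/-- The number of equivalence classes of `r`, i.e. `v_λ(A,B)` when `r` is an
equivalence relation on `B \ A`. -/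
noncomputable def numClasses (r : V → V → Prop) : ℕ :=
  Nat.card {t : Set V // ∃ x, r x x ∧ t = {y | r x y}}

/-- An edge of `B` that is neither contained in `A` nor contained in a single `r`-class:
these are the edges counted by `e_λ(A,B)`. -/
def BadEdge (G : SimpleGraph V) (A B : Set V) (r : V → V → Prop) (e : Sym2 V) : Prop :=
  e ∈ G.edgeSet ∧ (∀ v ∈ e, v ∈ B) ∧ ¬ (∀ v ∈ e, v ∈ A) ∧ ¬ ∃ x, ∀ v ∈ e, r x v

/-- `e_λ(A,B)`. -/
noncomputable def numEdges (G : SimpleGraph V) (A B : Set V) (r : V → V → Prop) : ℕ :=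
  Nat.card {e : Sym2 V // BadEdge G A B r e}

/-- The weight `w_λ(A,B) = v_λ(A,B) - α · e_λ(A,B)`. -/
noncomputable def weight (G : SimpleGraph V) (α : ℝ) (A B : Set V) (r : V → V → Prop) : ℝ :=
  (numClasses r : ℝ) - α * (numEdges G A B r : ℝ)

/-- `A <*_c B`. -/
def Ltc (G : SimpleGraph V) (α : ℝ) (A B : Set V) : Prop :=
  A ⊂ B ∧ ∀ r : V → V → Prop, IsEquivOn r (B \ A) → weight G α A B r < 0

/-- `A ≤*_i B`. -/
def Lei (G : SimpleGraph V) (α : ℝ) (A B : Set V) : Prop :=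
  A ⊆ B ∧ ∀ A' : Set V, A ⊆ A' → A' ⊂ B → Ltc G α A' B

/-- `A <*_i B`. -/
def Lti (G : SimpleGraph V) (α : ℝ) (A B : Set V) : Prop :=
  Lei G α A B ∧ A ≠ B

/-- `A ≤*_s B`. -/
def Les (G : SimpleGraph V) (α : ℝ) (A B : Set V) : Prop :=
  A ⊆ B ∧ ¬ ∃ A' : Set V, Lti G α A A' ∧ A' ⊆ B

/-- `A <*_s B`. -/
def Lts (G : SimpleGraph V) (α : ℝ) (A B : Set V) : Prop :=
  Les G α A B ∧ A ≠ B

/-- `A <*_pr B`. -/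
def Ltpr (G : SimpleGraph V) (α : ℝ) (A B : Set V) : Prop :=
  Lts G α A B ∧ ¬ ∃ C : Set V, Lts G α A C ∧ Lts G α C B

/-- `Ξ(A,B)`: the set of equivalence relations `λ` on `B \ A` such that every nonempty
`λ`-closed `C ⊆ B \ A` has `w_λ(A, A ∪ C) > 0`. -/
def Xi (G : SimpleGraph V) (α : ℝ) (A B : Set V) : Set (V → V → Prop) :=
  {r | IsEquivOn r (B \ A) ∧
    ∀ C ⊆ B \ A, C.Nonempty → RClosed r C → 0 < weight G α A (A ∪ C) (restrict r C)}

/-- `ξ(A,B) = max {w_λ(A,B) : λ ∈ Ξ(A,B)}`. -/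
noncomputable def xi (G : SimpleGraph V) (α : ℝ) (A B : Set V) : ℝ :=
  sSup {w : ℝ | ∃ r ∈ Xi G α A B, w = weight G α A B r}

section MyAux

variable (G : SimpleGraph V) (α : ℝ)

lemma my_setdiff_eq {A B C : Set V} (hAC : A ⊆ C) (hBC : B ∩ C = A) :
    (B ∪ C) \ C = B \ A := by
  ext x
  simp only [Set.mem_diff, Set.mem_union]
  constructor
  · rintro ⟨hx | hx, hxC⟩
    · exact ⟨hx, fun hA => hxC (hAC hA)⟩
    · exact absurd hx hxC
  · rintro ⟨hxB, hxA⟩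
    refine ⟨Or.inl hxB, fun hxC => hxA ?_⟩
    rw [← hBC]; exact ⟨hxB, hxC⟩

lemma my_badEdge_iff {A B C : Set V} (hAB : A ⊆ B) (hAC : A ⊆ C)
    (hBC : B ∩ C = A) (hfree : ∀ x ∈ C \ A, ∀ y ∈ B \ A, ¬ G.Adj x y)
    (r : V → V → Prop) (e : Sym2 V) :
    BadEdge G A B r e ↔ BadEdge G C (B ∪ C) r e := by
  induction e using Sym2.ind with
  | _ a b =>
  simp only [BadEdge, SimpleGraph.mem_edgeSet, Sym2.mem_iff, forall_eq_or_imp, forall_eq]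
  constructor
  · rintro ⟨hadj, ⟨haB, hbB⟩, hnA, hnr⟩
    refine ⟨hadj, ⟨Or.inl haB, Or.inl hbB⟩, fun hC => ?_, hnr⟩
    apply hnA
    constructor
    · rw [← hBC]; exact ⟨haB, hC.1⟩
    · rw [← hBC]; exact ⟨hbB, hC.2⟩
  · rintro ⟨hadj, ⟨haBC, hbBC⟩, hnC, hnr⟩
    by_cases haC : a ∈ C
    · -- then b ∉ C
      have hbC : b ∉ C := fun hb => hnC ⟨haC, hb⟩
      have hbB : b ∈ B := by rcases hbBC with h | h; exact h; exact absurd h hbC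
      have hbA : b ∉ A := fun h => hbC (hAC h)
      have haA : a ∈ A := by
        by_contra haA
        exact hfree a ⟨haC, haA⟩ b ⟨hbB, hbA⟩ hadj
      exact ⟨hadj, ⟨hAB haA, hbB⟩, fun h => hbA h.2, hnr⟩
    · have haB : a ∈ B := by rcases haBC with h | h; exact h; exact absurd h haC
      have haA : a ∉ A := fun h => haC (hAC h)
      have hbB : b ∈ B := by
        rcases hbBC with h | h
        · exact h
        · by_cases hbA : b ∈ A
          · exact hAB hbA
          · exact absurd hadj.symm (hfree b ⟨h, hbA⟩ a ⟨haB, haA⟩)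
      exact ⟨hadj, ⟨haB, hbB⟩, fun h => haA h.1, hnr⟩

lemma my_weight_eq {A B C : Set V} (hAB : A ⊆ B) (hAC : A ⊆ C)
    (hBC : B ∩ C = A) (hfree : ∀ x ∈ C \ A, ∀ y ∈ B \ A, ¬ G.Adj x y)
    (r : V → V → Prop) :
    weight G α A B r = weight G α C (B ∪ C) r := by
  have h : BadEdge G A B r = BadEdge G C (B ∪ C) r := by
    funext e; exact propext (my_badEdge_iff G hAB hAC hBC hfree r e)
  unfold weight numEdges
  rw [h]

lemma my_ltc_iff {A B C : Set V} (hAB : A ⊆ B) (hAC : A ⊆ C)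
    (hBC : B ∩ C = A) (hfree : ∀ x ∈ C \ A, ∀ y ∈ B \ A, ¬ G.Adj x y) :
    Ltc G α A B ↔ Ltc G α C (B ∪ C) := by
  have hset : (B ∪ C) \ C = B \ A := my_setdiff_eq hAC hBC
  unfold Ltc
  constructor
  · rintro ⟨hsub, hw⟩
    refine ⟨⟨Set.subset_union_right, fun hle => ?_⟩, fun r hr => ?_⟩
    · obtain ⟨x, hxB, hxA⟩ := Set.exists_of_ssubset hsub
      apply hxA
      rw [← hBC]; exact ⟨hxB, hle (Or.inl hxB)⟩
    · rw [hset] at hr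
      rw [← my_weight_eq G α hAB hAC hBC hfree r]
      exact hw r hr
  · rintro ⟨hsub, hw⟩
    refine ⟨⟨hAB, fun hle => ?_⟩, fun r hr => ?_⟩
    · obtain ⟨x, hxBC, hxC⟩ := Set.exists_of_ssubset hsub
      rcases hxBC with hxB | hxC'
      · exact hxC (hAC (hle hxB))
      · exact hxC hxC'
    · rw [my_weight_eq G α hAB hAC hBC hfree r]
      exact hw r (hset ▸ hr)

lemma my_ltc_mid {A B C A' : Set V} (hAB : A ⊆ B) (hAC : A ⊆ C)
    (hBC : B ∩ C = A) (hfree : ∀ x ∈ C \ A, ∀ y ∈ B \ A, ¬ G.Adj x y)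
    (hAA' : A ⊆ A') (hA'C : A' ⊆ C) :
    Ltc G α A' C ↔ Ltc G α (B ∪ A') (B ∪ C) := by
  have h1 : A' ⊆ B ∪ A' := Set.subset_union_right
  have h2 : C ∩ (B ∪ A') = A' := by
    rw [Set.inter_union_distrib_left, Set.inter_comm C B, hBC,
      Set.inter_eq_self_of_subset_right hA'C]
    exact Set.union_eq_self_of_subset_left hAA'
  have h3 : ∀ x ∈ (B ∪ A') \ A', ∀ y ∈ C \ A', ¬ G.Adj x y := by
    rintro x ⟨hxBA, hxA'⟩ y ⟨hyC, hyA'⟩ hadj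
    have hxB : x ∈ B := by rcases hxBA with h | h; exact h; exact absurd h hxA'
    exact hfree y ⟨hyC, fun h => hyA' (hAA' h)⟩ x ⟨hxB, fun h => hxA' (hAA' h)⟩ hadj.symm
  have := my_ltc_iff G α hA'C h1 h2 h3
  rwa [Set.union_comm C (B ∪ A'), Set.union_assoc,
    Set.union_eq_self_of_subset_left hA'C] at this

lemma my_lei_iff {A B C : Set V} (hAB : A ⊆ B) (hAC : A ⊆ C)
    (hBC : B ∩ C = A) (hfree : ∀ x ∈ C \ A, ∀ y ∈ B \ A, ¬ G.Adj x y) :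
    Lei G α A C ↔ Lei G α B (B ∪ C) := by
  constructor
  · rintro ⟨-, h⟩
    refine ⟨Set.subset_union_left, fun B' hBB' hB' => ?_⟩
    set A' := B' ∩ C with hA'def
    have hAA' : A ⊆ A' := fun x hx => ⟨hBB' (hAB hx), hAC hx⟩
    have hA'C : A' ⊆ C := Set.inter_subset_right
    have hBeq : B ∪ A' = B' := by
      ext x
      constructor
      · rintro (hx | hx)
        · exact hBB' hx
        · exact hx.1
      · intro hx
        rcases hB'.subset hx with h1 | h1
        · exact Or.inl h1
        · exact Or.inr ⟨hx, h1⟩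
    have hA'ssC : A' ⊂ C := by
      refine ⟨hA'C, fun hle => ?_⟩
      exact hB'.2 (Set.union_subset hBB' (hle.trans Set.inter_subset_left))
    have := (my_ltc_mid G α hAB hAC hBC hfree hAA' hA'C).mp (h A' hAA' hA'ssC)
    rwa [hBeq] at this
  · rintro ⟨-, h⟩
    refine ⟨hAC, fun A' hAA' hA'C => ?_⟩
    have hss : B ∪ A' ⊂ B ∪ C := by
      refine ⟨Set.union_subset_union_right B hA'C.subset, fun hle => ?_⟩
      obtain ⟨y, hyC, hyA'⟩ := Set.exists_of_ssubset hA'C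
      rcases hle (Or.inr hyC) with h1 | h1
      · apply hyA'
        apply hAA'
        rw [← hBC]; exact ⟨h1, hyC⟩
      · exact hyA' h1
    exact (my_ltc_mid G α hAB hAC hBC hfree hAA' hA'C.subset).mpr
      (h _ Set.subset_union_left hss)

lemma my_lei_mid {A B C A' : Set V} (hAB : A ⊆ B) (hAC : A ⊆ C)
    (hBC : B ∩ C = A) (hfree : ∀ x ∈ C \ A, ∀ y ∈ B \ A, ¬ G.Adj x y)
    (hAA' : A ⊆ A') (hA'B : A' ⊆ B) :
    Lei G α A A' ↔ Lei G α C (C ∪ A') := by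
  have h1 : C ∩ A' = A := by
    apply Set.Subset.antisymm
    · rintro x ⟨hxC, hxA'⟩
      rw [← hBC]; exact ⟨hA'B hxA', hxC⟩
    · exact fun x hx => ⟨hAC hx, hAA' hx⟩
  have h2 : ∀ x ∈ A' \ A, ∀ y ∈ C \ A, ¬ G.Adj x y := fun x hx y hy hadj =>
    hfree y hy x ⟨hA'B hx.1, hx.2⟩ hadj.symm
  exact my_lei_iff G α hAC hAA' h1 h2

lemma my_les_iff {A B C : Set V} (hAB : A ⊆ B) (hAC : A ⊆ C)
    (hBC : B ∩ C = A) (hfree : ∀ x ∈ C \ A, ∀ y ∈ B \ A, ¬ G.Adj x y) :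
    Les G α A B ↔ Les G α C (B ∪ C) := by
  constructor
  · rintro ⟨-, hn⟩
    refine ⟨Set.subset_union_right, ?_⟩
    rintro ⟨C', hlti, hsub⟩
    have hCC' : C ⊆ C' := hlti.1.1
    set A' := B ∩ C' with hA'def
    have hAA' : A ⊆ A' := fun x hx => ⟨hAB hx, hCC' (hAC hx)⟩
    have hA'B : A' ⊆ B := Set.inter_subset_left
    have hC'eq : C ∪ A' = C' := by
      ext x
      constructor
      · rintro (hx | hx)
        · exact hCC' hx
        · exact hx.2
      · intro hx
        rcases hsub hx with h1 | h1
        · exact Or.inr ⟨h1, hx⟩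
        · exact Or.inl h1
    have hlei : Lei G α A A' := by
      refine (my_lei_mid G α hAB hAC hBC hfree hAA' hA'B).mpr ?_
      rw [hC'eq]; exact hlti.1
    have hne : A ≠ A' := by
      intro heq
      apply hlti.2
      rw [← hC'eq, ← heq, Set.union_eq_self_of_subset_right hAC]
    exact hn ⟨A', ⟨hlei, hne⟩, hA'B⟩
  · rintro ⟨-, hn⟩
    refine ⟨hAB, ?_⟩
    rintro ⟨A', hlti, hsub⟩
    have hAA' : A ⊆ A' := hlti.1.1
    have hlei : Lei G α C (C ∪ A') :=
      (my_lei_mid G α hAB hAC hBC hfree hAA' hsub).mp hlti.1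
    have hne : C ≠ C ∪ A' := by
      intro heq
      apply hlti.2
      apply Set.Subset.antisymm hAA'
      intro x hx
      rw [← hBC]
      refine ⟨hsub hx, ?_⟩
      rw [heq]; exact Or.inr hx
    refine hn ⟨C ∪ A', ⟨hlei, hne⟩, ?_⟩
    exact Set.union_subset Set.subset_union_right (hsub.trans Set.subset_union_left)

end MyAux

theorem stmt19 {V : Type*} [Fintype V] (G : SimpleGraph V) (α : ℝ)
    (hirr : Irrational α) (h0 : 0 < α) (h1 : α < 1)
    (A B C : Set V) (hAB : A ⊆ B) (hAC : A ⊆ C) (hBC : B ∩ C = A)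
    (hfree : ∀ x ∈ C \ A, ∀ y ∈ B \ A, ¬ G.Adj x y) :
    (Ltc G α A B ↔ Ltc G α C (B ∪ C)) ∧
      (Lei G α A C ↔ Lei G α B (B ∪ C)) ∧
      (Les G α A B ↔ Les G α C (B ∪ C)) :=
  ⟨my_ltc_iff G α hAB hAC hBC hfree, my_lei_iff G α hAB hAC hBC hfree,
    my_les_iff G α hAB hAC hBC hfree⟩

end ZeroOneLaw
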